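/- Let X = (X_1,...,X_N) be an exchangeable vector of {0,1}-valued random variables with γ = X_1 + ... + X_N. Indifferent belief holds (i.e., there exists π ∈ [0,1] such that for every n < N and every x ∈ {0,1}^n with positive probability, P(X_{n+1}=1 | X_1=x_1,...,X_n=x_n) = π) if and only if γ ∼ Binomial(N, π) for some π ∈ [0,1]. -/

import Mathlib

open Finset

/-- number of 1's (trues) in a 0-1 vector -/
def cnt {n : ℕ} (x : Fin n → Bool) : ℕ := (Finset.univ.filter fun i => x i = true).card

/-- P(γ = k): probability that the total count of 1's equals k -/
def gam (N : ℕ) (p : (Fin N → Bool) → ℝ) (k : ℕ) : ℝ :=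
  ∑ y : Fin N → Bool, if cnt y = k then p y else 0

/-- P(X_1 = x_1, ..., X_n = x_n): probability of observing the prefix x -/
def pref (N : ℕ) (p : (Fin N → Bool) → ℝ) {n : ℕ} (hn : n ≤ N) (x : Fin n → Bool) : ℝ :=
  ∑ y : Fin N → Bool, if (∀ i : Fin n, y (Fin.castLE hn i) = x i) then p y else 0

/-!
Both sides say that `p` is the law of `N` independent Bernoulli(π) draws,
`p y = π ^ cnt y * (1 - π) ^ (N - cnt y)`. Indifference yields this by induction on the length of
a prefix (a prefix of probability zero has extensions of probability zero), and then `γ` is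
binomial because exactly `N.choose k` vectors have `k` ones.
Conversely, exchangeability makes `p` constant on each level set `cnt y = k`, so the binomial law
of `γ` determines `p`; marginalising the product law over the unobserved coordinates keeps the
product form, and the ratio of two such prefix probabilities is `π`.
-/

theorem card_filter_cnt_eq_choose (N k : ℕ) :
    #{y : Fin N → Bool | cnt y = k} = N.choose k := by
  conv_rhs => rw [← Fintype.card_fin N, ← card_univ, ← card_powersetCard]
  refine card_nbij' (fun y => ({i | y i = true} : Finset _)) (fun s i => decide (i ∈ s))
    (fun y hy => ?_) (fun s hs => ?_) (fun y _ => ?_) (fun s _ => ?_)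
  · simpa [cnt] using (mem_filter.1 (mem_coe.1 hy)).2
  · exact mem_coe.2 (mem_filter.2 ⟨mem_univ _, by simpa [cnt] using mem_coe.1 hs⟩)
  · funext i; simp
  · ext i; simp

theorem cnt_le {n : ℕ} (x : Fin n → Bool) : cnt x ≤ n :=
  (card_filter_le _ _).trans (card_fin n).le

theorem gam_eq_choose_mul {N : ℕ} {p : (Fin N → Bool) → ℝ} {k : ℕ} {c : ℝ}
    (hp : ∀ y, cnt y = k → p y = c) : gam N p k = N.choose k * c := by
  rw [gam, ← sum_filter, sum_congr rfl fun y hy => hp y (mem_filter.1 hy).2, sum_const,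
    card_filter_cnt_eq_choose, nsmul_eq_mul]

theorem eq_of_cnt_eq_of_exchangeable {N : ℕ} {p : (Fin N → Bool) → ℝ}
    (hexch : ∀ σ : Equiv.Perm (Fin N), ∀ y : Fin N → Bool, p (y ∘ σ) = p y)
    {y y' : Fin N → Bool} (h : cnt y = cnt y') : p y = p y' := by
  have hcard : Fintype.card {i // y' i = true} = Fintype.card {i // y i = true} := by
    rw [Fintype.card_subtype, Fintype.card_subtype]
    exact h.symm
  obtain ⟨e⟩ := Fintype.card_eq.mp hcard
  suffices y ∘ e.extendSubtype = y' by rw [← this, hexch]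
  funext i
  by_cases hi : y' i = true
  · simp [hi, e.extendSubtype_mem i hi]
  · simpa [hi] using e.extendSubtype_not_mem i hi

def bernoulliWeight (π : ℝ) {n : ℕ} (x : Fin n → Bool) : ℝ :=
  ∏ i, if x i then π else 1 - π

theorem bernoulliWeight_snoc (π : ℝ) {n : ℕ} (x : Fin n → Bool) (b : Bool) :
    bernoulliWeight π (Fin.snoc x b : Fin (n + 1) → Bool) =
      bernoulliWeight π x * if b then π else 1 - π := by
  simp [bernoulliWeight, Fin.prod_univ_castSucc]

theorem bernoulliWeight_eq_pow (π : ℝ) {n : ℕ} (x : Fin n → Bool) :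
    bernoulliWeight π x = π ^ cnt x * (1 - π) ^ (n - cnt x) := by
  have h := card_filter_add_card_filter_not (s := (univ : Finset (Fin n))) (fun i => x i = true)
  rw [card_univ, Fintype.card_fin] at h
  rw [bernoulliWeight, prod_ite, prod_const, prod_const, cnt]
  congr 2
  omega

section

variable {N : ℕ} {p : (Fin N → Bool) → ℝ} {π : ℝ}

theorem pref_nonneg (hnn : ∀ y, 0 ≤ p y) {n : ℕ} (hn : n ≤ N) (x : Fin n → Bool) :
    0 ≤ pref N p hn x :=
  sum_nonneg fun y _ => by split_ifs <;> simp [hnn]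

theorem pref_zero (hsum : ∑ y, p y = 1) (h0 : 0 ≤ N) (x : Fin 0 → Bool) :
    pref N p h0 x = 1 := by
  simpa [pref] using hsum

theorem pref_self (hN : N ≤ N) (x : Fin N → Bool) : pref N p hN x = p x := by
  simp [pref, ← funext_iff]

theorem forall_castLE_eq_snoc_iff {n : ℕ} (hn : n < N) (y : Fin N → Bool) (x : Fin n → Bool)
    (b : Bool) :
    (∀ i : Fin (n + 1), y (Fin.castLE hn i) = (Fin.snoc x b : Fin (n + 1) → Bool) i) ↔
      (∀ i : Fin n, y (Fin.castLE hn.le i) = x i) ∧ y ⟨n, hn⟩ = b := by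
  simp only [Fin.forall_fin_succ', Fin.snoc_castSucc, Fin.snoc_last]
  rfl

theorem pref_eq_pref_snoc_add {n : ℕ} (hn : n < N) (x : Fin n → Bool) :
    pref N p hn.le x = pref N p hn (Fin.snoc x true) + pref N p hn (Fin.snoc x false) := by
  rw [pref, pref, pref, ← sum_add_distrib]
  refine sum_congr rfl fun y _ => ?_
  simp only [forall_castLE_eq_snoc_iff]
  split_ifs <;> cases y ⟨n, hn⟩ <;> simp_all

theorem pref_snoc_of_indifferent (hnn : ∀ y, 0 ≤ p y)
    (H : ∀ (n : ℕ) (hn : n < N) (x : Fin n → Bool),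
      0 < pref N p hn.le x → pref N p hn (Fin.snoc x true) / pref N p hn.le x = π)
    {n : ℕ} (hn : n < N) (x : Fin n → Bool) (b : Bool) :
    pref N p hn (Fin.snoc x b) = pref N p hn.le x * if b then π else 1 - π := by
  have hsplit := pref_eq_pref_snoc_add (p := p) hn x
  have htrue := pref_nonneg hnn hn (Fin.snoc x true)
  have hfalse := pref_nonneg hnn hn (Fin.snoc x false)
  rcases (pref_nonneg hnn hn.le x).eq_or_lt with hzero | hpos
  · cases b <;> simp only [← hzero] <;> linarith
  · have hπ : pref N p hn (Fin.snoc x true) = pref N p hn.le x * π := by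
      rw [← H n hn x hpos, mul_div_cancel₀ _ hpos.ne']
    cases b <;> simp only [Bool.false_eq_true, if_true, if_false] <;> linarith

theorem pref_eq_bernoulliWeight_of_indifferent (hnn : ∀ y, 0 ≤ p y) (hsum : ∑ y, p y = 1)
    (H : ∀ (n : ℕ) (hn : n < N) (x : Fin n → Bool),
      0 < pref N p hn.le x → pref N p hn (Fin.snoc x true) / pref N p hn.le x = π)
    {n : ℕ} (hn : n ≤ N) (x : Fin n → Bool) : pref N p hn x = bernoulliWeight π x := by
  induction n with
  | zero => simp [pref_zero hsum, bernoulliWeight]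
  | succ n ih =>
    obtain ⟨x', b, rfl⟩ : ∃ x' b, x = Fin.snoc x' b :=
      ⟨Fin.init x, x (Fin.last n), (Fin.snoc_init_self x).symm⟩
    rw [pref_snoc_of_indifferent hnn H hn, ih, bernoulliWeight_snoc]

theorem eq_bernoulliWeight_of_gam_eq
    (hexch : ∀ σ : Equiv.Perm (Fin N), ∀ y : Fin N → Bool, p (y ∘ σ) = p y)
    (H : ∀ k ≤ N, gam N p k = (N.choose k : ℝ) * π ^ k * (1 - π) ^ (N - k))
    (y : Fin N → Bool) : p y = bernoulliWeight π y := by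
  have h := H (cnt y) (cnt_le y)
  rw [gam_eq_choose_mul fun y' hy' => eq_of_cnt_eq_of_exchangeable hexch hy', mul_assoc] at h
  rw [bernoulliWeight_eq_pow]
  exact mul_left_cancel₀ (Nat.cast_ne_zero.2 (Nat.choose_pos (cnt_le y)).ne') h

theorem pref_eq_bernoulliWeight (hp : ∀ y, p y = bernoulliWeight π y) {n : ℕ} (hn : n ≤ N)
    (x : Fin n → Bool) : pref N p hn x = bernoulliWeight π x := by
  revert x
  induction hn using Nat.decreasingInduction with
  | self => intro x; rw [pref_self, hp]
  | of_succ n hn ih =>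
    intro x
    rw [pref_eq_pref_snoc_add hn, ih, ih, bernoulliWeight_snoc, bernoulliWeight_snoc]
    simp only [Bool.false_eq_true, if_true, if_false]
    ring

end

/-- Indifferent belief holds iff γ is Binomial(N,π) for some π ∈ [0,1]. -/
theorem indifferent_iff_binomial (N : ℕ) (p : (Fin N → Bool) → ℝ)
    (hnn : ∀ y, 0 ≤ p y) (hsum : ∑ y, p y = 1)
    (hexch : ∀ σ : Equiv.Perm (Fin N), ∀ y : Fin N → Bool, p (y ∘ σ) = p y) :
    (∃ π : ℝ, π ∈ Set.Icc (0:ℝ) 1 ∧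
      ∀ (n : ℕ) (hn : n < N) (x : Fin n → Bool),
        0 < pref N p hn.le x →
        pref N p hn (Fin.snoc x true) / pref N p hn.le x = π) ↔
    (∃ π : ℝ, π ∈ Set.Icc (0:ℝ) 1 ∧
      ∀ k ≤ N, gam N p k = (N.choose k : ℝ) * π ^ k * (1 - π) ^ (N - k)) := by
  constructor
  · rintro ⟨π, hπ, H⟩
    refine ⟨π, hπ, fun k _ => ?_⟩
    rw [mul_assoc]
    refine gam_eq_choose_mul fun y hy => ?_
    rw [← pref_self (p := p) le_rfl, pref_eq_bernoulliWeight_of_indifferent hnn hsum H,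
      bernoulliWeight_eq_pow, hy]
  · rintro ⟨π, hπ, H⟩
    have hp := eq_bernoulliWeight_of_gam_eq hexch H
    refine ⟨π, hπ, fun n hn x hpos => ?_⟩
    rw [pref_eq_bernoulliWeight hp] at hpos ⊢
    rw [pref_eq_bernoulliWeight hp, bernoulliWeight_snoc, if_pos rfl,
      mul_div_cancel_left₀ _ hpos.ne']
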